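/- Let (α_n) and (β_n) be widely separated sequences of sub-probability measures on ℝ^d, i.e., ∫∫ V(x−y) dα_n(x) dβ_n(y) → 0 for some strictly positive continuous V vanishing at infinity. Then for every k ≥ 2 and every continuous translation-invariant f: (ℝ^d)^k → ℝ vanishing at infinity, the difference ∫ f d(α_n+β_n)^{⊗k} − ∫ f dα_n^{⊗k} − ∫ f dβ_n^{⊗k} tends to 0 as n → ∞. -/

import Mathlib

open MeasureTheory Filter Topology Metric

/-! Expanding `(α + β)^{⊗k}` multilinearly, the difference in question is a sum over the mixed
products, in each of which some coordinate `i` is drawn from `α` and some `j` from `β`.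
Translation invariance and decay away from the diagonal make `f` bounded and give, for every
`ε > 0`, a bound `|f x| ≤ ε + K V (x i - x j)`. Integrated against a mixed product of
sub-probability measures this bounds the term by `ε + K ∫∫ V (x - y) dβ dα`, whose second summand
tends to `0`. -/

namespace MeasureTheory.Measure

instance sigmaFinite_ite {α : Type*} [MeasurableSpace α] {p : Prop} [Decidable p]
    (μ ν : Measure α) [SigmaFinite μ] [SigmaFinite ν] : SigmaFinite (if p then μ else ν) := by
  split <;> infer_instance

instance isFiniteMeasure_ite {α : Type*} [MeasurableSpace α] {p : Prop} [Decidable p]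
    (μ ν : Measure α) [IsFiniteMeasure μ] [IsFiniteMeasure ν] :
    IsFiniteMeasure (if p then μ else ν) := by
  split <;> infer_instance

variable {ι : Type*} [Fintype ι] {X : ι → Type*} [∀ i, MeasurableSpace (X i)]

theorem pi_univ_le_one (μ : (i : ι) → Measure (X i)) [∀ i, SigmaFinite (μ i)]
    (hμ : ∀ i, μ i Set.univ ≤ 1) : Measure.pi μ Set.univ ≤ 1 := by
  rw [pi_univ]
  exact Finset.prod_le_one' fun l _ => hμ l

variable [DecidableEq ι]

theorem pi_add (μ ν : (i : ι) → Measure (X i)) [∀ i, SigmaFinite (μ i)] [∀ i, SigmaFinite (ν i)] :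
    Measure.pi (fun i => μ i + ν i)
      = ∑ t : Finset ι, Measure.pi fun i => if i ∈ t then μ i else ν i := by
  refine pi_eq fun s _ => ?_
  simp only [finsetSum_apply, pi_pi, add_apply, Fintype.prod_add]
  refine Finset.sum_congr rfl fun t _ => ?_
  rw [← Finset.prod_mul_prod_compl t]
  congr 1 <;> refine Finset.prod_congr rfl fun i hi => ?_
  · simp [hi]
  · simp [Finset.mem_compl.mp hi]

theorem pi_map_eval_pair (μ : (i : ι) → Measure (X i)) [∀ i, IsFiniteMeasure (μ i)] {i j : ι}
    (hij : i ≠ j) :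
    (Measure.pi μ).map (fun x => (x i, x j))
      = ((∏ l ∈ (Finset.univ.erase i).erase j, μ l Set.univ) • μ i).prod (μ j) := by
  have : IsFiniteMeasure ((∏ l ∈ (Finset.univ.erase i).erase j, μ l Set.univ) • μ i) :=
    (μ i).smul_finite (ENNReal.prod_ne_top fun l _ => measure_ne_top _ _)
  refine (prod_eq fun s t hs ht => ?_).symm
  have hpre : (fun x : (l : ι) → X l => (x i, x j)) ⁻¹' (s ×ˢ t)
      = Set.univ.pi (Function.update (Function.update (fun _ => Set.univ) i s) j t) := by
    ext x
    simp only [Set.mem_preimage, Set.mem_prod, Set.mem_univ_pi]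
    refine ⟨fun ⟨hi, hj⟩ l => ?_, fun h => ⟨by simpa [hij] using h i, by simpa using h j⟩⟩
    rcases eq_or_ne l j with rfl | hlj
    · simpa
    rcases eq_or_ne l i with rfl | hli
    · simpa [hlj]
    · simp [hlj, hli]
  rw [map_apply (by fun_prop) (hs.prod ht), hpre, pi_pi, smul_apply, smul_eq_mul,
    ← Finset.mul_prod_erase _ _ (Finset.mem_univ i),
    ← Finset.mul_prod_erase _ _ (Finset.mem_erase.mpr ⟨hij.symm, Finset.mem_univ j⟩)]
  have hrest : ∀ l ∈ (Finset.univ.erase i).erase j,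
      μ l (Function.update (Function.update (fun _ => Set.univ) i s) j t l) = μ l Set.univ := by
    intro l hl
    simp [Finset.ne_of_mem_erase hl, Finset.ne_of_mem_erase (Finset.mem_of_mem_erase hl)]
  rw [Finset.prod_congr rfl hrest]
  simp [hij]
  ring

end MeasureTheory.Measure

namespace MeasureTheory

variable {ι : Type*} [Fintype ι] [DecidableEq ι] {X : ι → Type*} [∀ i, MeasurableSpace (X i)]

theorem integral_pi_add_sub_sub [Nonempty ι] (μ ν : (i : ι) → Measure (X i))
    [∀ i, SigmaFinite (μ i)] [∀ i, SigmaFinite (ν i)] {f : ((i : ι) → X i) → ℝ}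
    (hf : ∀ t : Finset ι, Integrable f (Measure.pi fun i => if i ∈ t then μ i else ν i)) :
    ∫ x, f x ∂Measure.pi (fun i => μ i + ν i) - ∫ x, f x ∂Measure.pi μ - ∫ x, f x ∂Measure.pi ν
      = ∑ t ∈ Finset.univ \ {∅, Finset.univ},
          ∫ x, f x ∂Measure.pi fun i => if i ∈ t then μ i else ν i := by
  rw [Measure.pi_add, integral_finsetSum_measure fun t _ => hf t,
    ← Finset.sum_sdiff (Finset.subset_univ {∅, Finset.univ}),
    Finset.sum_pair Finset.univ_nonempty.ne_empty.symm]
  simp only [Finset.mem_univ, ite_true, Finset.notMem_empty, ite_false]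
  ring

section

variable (μ : (i : ι) → Measure (X i)) [∀ i, IsFiniteMeasure (μ i)] {i j : ι}

theorem integrable_comp_eval_pair (hij : i ≠ j) {G : Type*} [NormedAddCommGroup G]
    {g : X i × X j → G} (hg : Integrable g ((μ i).prod (μ j))) :
    Integrable (fun x => g (x i, x j)) (Measure.pi μ) := by
  have hc := ENNReal.prod_ne_top fun l (_ : l ∈ (Finset.univ.erase i).erase j) =>
    measure_ne_top (μ l) Set.univ
  have hg' := hg.smul_measure hc
  rw [← Measure.prod_smul_left, ← Measure.pi_map_eval_pair μ hij] at hg'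
  exact (integrable_map_measure hg'.aestronglyMeasurable (by fun_prop)).mp hg'

theorem integral_comp_eval_pair (hij : i ≠ j) {G : Type*} [NormedAddCommGroup G]
    [NormedSpace ℝ G] {g : X i × X j → G} (hg : AEStronglyMeasurable g ((μ i).prod (μ j))) :
    ∫ x, g (x i, x j) ∂Measure.pi μ
      = (∏ l ∈ (Finset.univ.erase i).erase j, μ l Set.univ).toReal
          • ∫ p, g p ∂(μ i).prod (μ j) := by
  have hg' := hg.smul_measure (∏ l ∈ (Finset.univ.erase i).erase j, μ l Set.univ)
  rw [← Measure.prod_smul_left, ← Measure.pi_map_eval_pair μ hij] at hg'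
  rw [← integral_map (by fun_prop) hg', Measure.pi_map_eval_pair μ hij, Measure.prod_smul_left,
    integral_smul_measure]

theorem abs_integral_pi_le_add_mul (hμ : ∀ i, μ i Set.univ ≤ 1) (hij : i ≠ j)
    {f : ((i : ι) → X i) → ℝ} (hf : Integrable f (Measure.pi μ)) {g : X i × X j → ℝ}
    (hg0 : ∀ p, 0 ≤ g p) (hg : Integrable g ((μ i).prod (μ j))) {ε K : ℝ} (hε : 0 ≤ ε) (hK : 0 ≤ K)
    (hfg : ∀ x, |f x| ≤ ε + K * g (x i, x j)) :
    |∫ x, f x ∂Measure.pi μ| ≤ ε + K * ∫ p, g p ∂(μ i).prod (μ j) := by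
  have hgπ := integrable_comp_eval_pair μ hij hg
  have hmass : (Measure.pi μ).real Set.univ ≤ 1 :=
    ENNReal.toReal_le_of_le_ofReal zero_le_one (by simpa using Measure.pi_univ_le_one μ hμ)
  have hc : (∏ l ∈ (Finset.univ.erase i).erase j, μ l Set.univ).toReal ≤ 1 :=
    ENNReal.toReal_le_of_le_ofReal zero_le_one
      (by simpa using Finset.prod_le_one' fun l _ => hμ l)
  have hgint : 0 ≤ ∫ p, g p ∂(μ i).prod (μ j) := integral_nonneg hg0
  calc |∫ x, f x ∂Measure.pi μ| ≤ ∫ x, |f x| ∂Measure.pi μ := abs_integral_le_integral_abs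
    _ ≤ ∫ x, ε + K * g (x i, x j) ∂Measure.pi μ :=
        integral_mono hf.abs ((integrable_const ε).add (hgπ.const_mul K)) hfg
    _ = (Measure.pi μ).real Set.univ * ε
          + K * ((∏ l ∈ (Finset.univ.erase i).erase j, μ l Set.univ).toReal
            * ∫ p, g p ∂(μ i).prod (μ j)) := by
        rw [integral_add (integrable_const ε) (hgπ.const_mul K), integral_const, integral_const_mul,
          integral_comp_eval_pair μ hij hg.aestronglyMeasurable, smul_eq_mul, smul_eq_mul]
    _ ≤ ε + K * ∫ p, g p ∂(μ i).prod (μ j) := by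
        gcongr
        · exact mul_le_of_le_one_left hε hmass
        · exact mul_le_of_le_one_left hgint hc

end

end MeasureTheory

section VanishingAwayFromDiagonal

variable {ι E : Type*} [NormedAddCommGroup E]

def VanishesAwayFromDiagonal (f : (ι → E) → ℝ) : Prop :=
  ∀ ε : ℝ, 0 < ε → ∃ M : ℝ, ∀ x : ι → E, (∃ i j, i ≠ j ∧ M ≤ ‖x i - x j‖) → |f x| ≤ ε

variable [ProperSpace E]

/-- Translating `x` so that `x i₀ = 0` lands it either in a compact box or where `|f| ≤ 1`. -/
theorem VanishesAwayFromDiagonal.exists_forall_abs_le [Fintype ι] [Nonempty ι] {f : (ι → E) → ℝ}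
    (hf : VanishesAwayFromDiagonal f) (hfc : Continuous f)
    (hinv : ∀ (x : ι → E) (y : E), f (fun i => x i + y) = f x) :
    ∃ C, ∀ x, |f x| ≤ C := by
  obtain ⟨M, hM⟩ := hf 1 one_pos
  obtain ⟨C, hC⟩ := (isCompact_univ_pi fun _ : ι => isCompact_closedBall (0 : E) (max M 0))
    |>.exists_bound_of_continuousOn hfc.continuousOn
  refine ⟨max C 1, fun x => ?_⟩
  by_cases hfar : ∃ i j, i ≠ j ∧ M ≤ ‖x i - x j‖
  · exact (hM x hfar).trans (le_max_right _ _)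
  push Not at hfar
  obtain ⟨i₀⟩ := ‹Nonempty ι›
  have hbox : (fun i => x i + -x i₀) ∈ Set.univ.pi fun _ => closedBall (0 : E) (max M 0) := by
    intro i _
    dsimp only
    rw [mem_closedBall_zero_iff, ← sub_eq_add_neg]
    rcases eq_or_ne i i₀ with rfl | hi
    · simp
    · exact (hfar i i₀ hi).le.trans (le_max_left _ _)
  rw [← hinv x (-x i₀)]
  exact (hC _ hbox).trans (le_max_left _ _)

/-- `K = C / m`, where `m > 0` bounds `V` from below on the ball outside which `|f| ≤ ε`. -/
theorem VanishesAwayFromDiagonal.exists_abs_le_add_mul {f : (ι → E) → ℝ}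
    (hf : VanishesAwayFromDiagonal f) {C : ℝ} (hC : ∀ x, |f x| ≤ C) {V : E → ℝ}
    (hVc : Continuous V) (hVpos : ∀ z, 0 < V z) {i j : ι} (hij : i ≠ j) {ε : ℝ} (hε : 0 < ε) :
    ∃ K, 0 ≤ K ∧ ∀ x, |f x| ≤ ε + K * V (x i - x j) := by
  obtain ⟨M, hM⟩ := hf ε hε
  obtain ⟨m, hm, hVm⟩ := (isCompact_closedBall (0 : E) M).exists_forall_le' hVc.continuousOn
    fun z _ => hVpos z
  have hC0 : 0 ≤ C := (abs_nonneg _).trans (hC 0)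
  refine ⟨C / m, by positivity, fun x => ?_⟩
  have hKV : 0 ≤ C / m * V (x i - x j) := mul_nonneg (by positivity) (hVpos _).le
  rcases le_or_gt M ‖x i - x j‖ with hfar | hnear
  · linarith [hM x ⟨i, j, hij, hfar⟩]
  · have : C ≤ C / m * V (x i - x j) := by
      rw [div_mul_eq_mul_div, le_div_iff₀ hm]
      exact mul_le_mul_of_nonneg_left (hVm _ (mem_closedBall_zero_iff.mpr hnear.le)) hC0
    linarith [hC x]

end VanishingAwayFromDiagonal

theorem tendsto_zero_of_forall_abs_le_add_mul {α : Type*} {l : Filter α} {a s : α → ℝ}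
    (hs : Tendsto s l (𝓝 0)) (h : ∀ ε > 0, ∃ K, ∀ n, |a n| ≤ ε + K * s n) :
    Tendsto a l (𝓝 0) := by
  rw [Metric.tendsto_nhds]
  intro ε hε
  obtain ⟨K, hK⟩ := h (ε / 2) (by positivity)
  have hKs : Tendsto (fun n => K * s n) l (𝓝 0) := by simpa using hs.const_mul K
  filter_upwards [hKs.eventually (gt_mem_nhds (half_pos hε))] with n hn
  rw [Real.dist_0_eq_abs]
  linarith [hK n]

/-- For widely separated sequences α_n, β_n of sub-probability measures and every
continuous translation-invariant f : (ℝ^d)^k → ℝ vanishing at infinity (k ≥ 2),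
∫ f d(α_n+β_n)^{⊗k} − ∫ f dα_n^{⊗k} − ∫ f dβ_n^{⊗k} → 0. -/
theorem stmt9 (d k : ℕ) (hk : 2 ≤ k) (α β : ℕ → Measure (EuclideanSpace ℝ (Fin d)))
    [∀ n, IsFiniteMeasure (α n)] [∀ n, IsFiniteMeasure (β n)]
    (hα : ∀ n, α n Set.univ ≤ 1) (hβ : ∀ n, β n Set.univ ≤ 1)
    (V : EuclideanSpace ℝ (Fin d) → ℝ) (hVc : Continuous V) (hVpos : ∀ x, 0 < V x)
    (hV0 : Tendsto V (cocompact (EuclideanSpace ℝ (Fin d))) (𝓝 0))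
    (hsep : Tendsto (fun n => ∫ x, ∫ y, V (x - y) ∂(β n) ∂(α n)) atTop (𝓝 0))
    (f : (Fin k → EuclideanSpace ℝ (Fin d)) → ℝ) (hfc : Continuous f)
    (hinv : ∀ (x : Fin k → EuclideanSpace ℝ (Fin d)) (y : EuclideanSpace ℝ (Fin d)),
      f (fun i => x i + y) = f x)
    (hvanish : ∀ ε : ℝ, 0 < ε → ∃ M : ℝ, ∀ x : Fin k → EuclideanSpace ℝ (Fin d),
      (∃ i j, i ≠ j ∧ M ≤ ‖x i - x j‖) → |f x| ≤ ε) :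
    Tendsto (fun n =>
        (∫ x, f x ∂(Measure.pi fun _ : Fin k => α n + β n))
          - (∫ x, f x ∂(Measure.pi fun _ : Fin k => α n))
          - (∫ x, f x ∂(Measure.pi fun _ : Fin k => β n))) atTop (𝓝 0) := by
  have : Nonempty (Fin k) := ⟨⟨0, by omega⟩⟩
  obtain ⟨C, hC⟩ := VanishesAwayFromDiagonal.exists_forall_abs_le hvanish hfc hinv
  have hf : ∀ (μ : Measure (Fin k → EuclideanSpace ℝ (Fin d))) [IsFiniteMeasure μ],
      Integrable f μ :=
    fun _ _ => .of_bound hfc.aestronglyMeasurable C (ae_of_all _ hC)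
  let V₀ : ZeroAtInftyContinuousMap (EuclideanSpace ℝ (Fin d)) ℝ := ⟨⟨V, hVc⟩, hV0⟩
  have hV : ∀ (μ ν : Measure (EuclideanSpace ℝ (Fin d))) [IsFiniteMeasure μ] [IsFiniteMeasure ν],
      Integrable (fun p => V (p.1 - p.2)) (μ.prod ν) :=
    fun _ _ _ _ => (V₀.toBCF.compContinuous ⟨_, continuous_fst.sub continuous_snd⟩).integrable _
  simp only [integral_pi_add_sub_sub _ _ fun _ => hf _]
  rw [← Finset.sum_const_zero (s := (Finset.univ : Finset (Finset (Fin k))) \ {∅, Finset.univ})]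
  refine tendsto_finsetSum _ fun t ht => ?_
  rw [Finset.mem_sdiff, Finset.mem_insert, Finset.mem_singleton, not_or] at ht
  obtain ⟨i, hi⟩ := Finset.nonempty_iff_ne_empty.mpr ht.2.1
  obtain ⟨j, hj⟩ : ∃ j, j ∉ t := by simpa [Finset.eq_univ_iff_forall] using ht.2.2
  have hij : i ≠ j := ne_of_mem_of_not_mem hi hj
  refine tendsto_zero_of_forall_abs_le_add_mul hsep fun ε hε => ?_
  obtain ⟨K, hK0, hK⟩ :=
    VanishesAwayFromDiagonal.exists_abs_le_add_mul hvanish hC hVc hVpos hij hε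
  refine ⟨K, fun n => ?_⟩
  have := abs_integral_pi_le_add_mul (fun l => if l ∈ t then α n else β n)
    (fun l => by split_ifs; exacts [hα n, hβ n]) hij (hf _) (g := fun p => V (p.1 - p.2))
    (fun p => (hVpos _).le) (hV _ _) hε.le hK0 hK
  simpa [hi, hj, integral_prod _ (hV _ _)] using this
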